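/- Let a > b > 0, c² = a² − b², r = a*b/(a+b), and t ∈ ℝ. Define P₁ = (a·cos t, b·sin t), w₁ = sqrt(c²(a+b)²·cos²t + 2ab³ + b⁴), w₂ = −ab/((c²·cos²t + b²)(a+b)), P₂ = w₂·(a²·cos t − w₁·sin t, b²·sin t + w₁·cos t), and P₃ = w₂·(a²·cos t + w₁·sin t, b²·sin t − w₁·cos t). Then P₂ and P₃ lie on the ellipse x²/a² + y²/b² = 1, and each of the three lines P₁P₂, P₂P₃, P₃P₁ has distance exactly r from the origin. -/

import Mathlib

/-!
Let `E = ellipseToCircle a b`, `(x, y) ↦ (x / a, y / b)`, which maps the ellipse onto the unit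
circle. The vertices satisfy `⟪E Pᵢ, Pⱼ⟫ = -r` for `i ≠ j`, so the side `PᵢPⱼ` lies on the line
`⟪n, x⟫ = r` whose normal `n = -E Pₖ` (`k` the third vertex) is a unit vector, and such a line is
at distance `|r|` from the origin. The vertices are pairwise distinct because `⟪E P, P⟫ > 0` on
the ellipse while `-r < 0`. The algebra behind these identities is `w₁² = (a + b)² (‖P₁‖² - r²)`.
-/

/-- The point of the plane with coordinates `(x, y)`. -/
noncomputable def pt (x y : ℝ) : EuclideanSpace ℝ (Fin 2) := WithLp.toLp 2 ![x, y]

open Module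

theorem inner_eq_of_mem_affineSpan_pair {E : Type*} [NormedAddCommGroup E] [InnerProductSpace ℝ E]
    {n p q x : E} {r : ℝ} (hp : inner ℝ n p = r) (hq : inner ℝ n q = r)
    (hx : x ∈ line[ℝ, p, q]) : inner ℝ n x = r := by
  rw [← vsub_vadd x p, vadd_left_mem_affineSpan_pair] at hx
  obtain ⟨t, ht⟩ := hx
  rw [← vsub_vadd x p, ← ht, vadd_eq_add, inner_add_right, inner_smul_right, vsub_eq_sub,
    inner_sub_right, hp, hq]
  ring

theorem smul_mem_affineSpan_pair_of_inner_eq {E : Type*} [NormedAddCommGroup E]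
    [InnerProductSpace ℝ E] [Fact (finrank ℝ E = 2)]
    {n p q : E} {r : ℝ} (hn : ‖n‖ = 1) (hp : inner ℝ n p = r) (hq : inner ℝ n q = r)
    (hpq : p ≠ q) : r • n ∈ line[ℝ, p, q] := by
  have hn0 : n ≠ 0 := by rintro rfl; simp at hn
  have hfoot : inner ℝ n (r • n - p) = 0 := by
    rw [inner_sub_right, inner_smul_right, real_inner_self_eq_norm_sq, hn, hp]; ring
  have hdir : inner ℝ n (q - p) = 0 := by rw [inner_sub_right, hp, hq, sub_self]
  obtain ⟨t, ht⟩ := Submodule.mem_span_singleton.mp <|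
    Submodule.mem_span_singleton_of_inner_eq_zero_of_inner_eq_zero hn0 (sub_ne_zero.mpr hpq.symm)
      hfoot hdir
  rw [← vsub_vadd (r • n) p, vadd_left_mem_affineSpan_pair]
  exact ⟨t, by simpa using ht⟩

theorem infDist_zero_affineSpan_pair_of_inner_eq {E : Type*} [NormedAddCommGroup E]
    [InnerProductSpace ℝ E] [Fact (finrank ℝ E = 2)]
    {n p q : E} {r : ℝ} (hn : ‖n‖ = 1) (hp : inner ℝ n p = r) (hq : inner ℝ n q = r)
    (hpq : p ≠ q) : Metric.infDist 0 (line[ℝ, p, q] : Set E) = |r| := by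
  have hfoot := smul_mem_affineSpan_pair_of_inner_eq hn hp hq hpq
  refine le_antisymm ?_ ((Metric.le_infDist ⟨_, hfoot⟩).mpr fun x hx => ?_)
  · simpa [norm_smul, hn] using Metric.infDist_le_dist_of_mem (x := 0) hfoot
  · calc |r| = |inner ℝ n x| := by rw [inner_eq_of_mem_affineSpan_pair hp hq hx]
      _ ≤ ‖n‖ * ‖x‖ := abs_real_inner_le_norm n x
      _ = dist 0 x := by rw [hn, one_mul, dist_zero_left]

@[simp] theorem pt_apply_zero (x y : ℝ) : pt x y 0 = x := rfl
@[simp] theorem pt_apply_one (x y : ℝ) : pt x y 1 = y := rfl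

theorem inner_pt_left (x y : ℝ) (q : EuclideanSpace ℝ (Fin 2)) :
    inner ℝ (pt x y) q = x * q 0 + y * q 1 := by
  simp [EuclideanSpace.inner_eq_star_dotProduct, dotProduct, Fin.sum_univ_two, pt]
  ring

theorem norm_pt (x y : ℝ) : ‖pt x y‖ = √(x ^ 2 + y ^ 2) := by
  simp [EuclideanSpace.norm_eq, Fin.sum_univ_two, pt]

noncomputable def ellipseToCircle (a b : ℝ) (p : EuclideanSpace ℝ (Fin 2)) :
    EuclideanSpace ℝ (Fin 2) :=
  pt (p 0 / a) (p 1 / b)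

theorem inner_ellipseToCircle (a b : ℝ) (p q : EuclideanSpace ℝ (Fin 2)) :
    inner ℝ (ellipseToCircle a b p) q = p 0 * q 0 / a + p 1 * q 1 / b := by
  rw [ellipseToCircle, inner_pt_left]; ring

theorem inner_ellipseToCircle_comm (a b : ℝ) (p q : EuclideanSpace ℝ (Fin 2)) :
    inner ℝ (ellipseToCircle a b p) q = inner ℝ (ellipseToCircle a b q) p := by
  simp only [inner_ellipseToCircle]; ring

theorem norm_ellipseToCircle {a b : ℝ} {p : EuclideanSpace ℝ (Fin 2)}
    (hp : p 0 ^ 2 / a ^ 2 + p 1 ^ 2 / b ^ 2 = 1) : ‖ellipseToCircle a b p‖ = 1 := by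
  rw [ellipseToCircle, norm_pt, div_pow, div_pow, hp, Real.sqrt_one]

theorem inner_ellipseToCircle_self_pos {a b : ℝ} (ha : 0 < a) (hb : 0 < b)
    {p : EuclideanSpace ℝ (Fin 2)} (hp : p 0 ^ 2 / a ^ 2 + p 1 ^ 2 / b ^ 2 = 1) :
    0 < inner ℝ (ellipseToCircle a b p) p := by
  have h₀ : p 0 * p 0 / a = a * (p 0 ^ 2 / a ^ 2) := by field_simp
  have h₁ : p 1 * p 1 / b = b * (p 1 ^ 2 / b ^ 2) := by field_simp
  have hu : 0 ≤ p 0 ^ 2 / a ^ 2 := by positivity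
  have hv : 0 ≤ p 1 ^ 2 / b ^ 2 := by positivity
  rw [inner_ellipseToCircle, h₀, h₁]
  rcases le_total a b with h | h
  · nlinarith [mul_nonneg (sub_nonneg.2 h) hv]
  · nlinarith [mul_nonneg (sub_nonneg.2 h) hu]

noncomputable def incircleVertex (a b C S w₂ w : ℝ) : EuclideanSpace ℝ (Fin 2) :=
  pt (w₂ * (a ^ 2 * C - w * S)) (w₂ * (b ^ 2 * S + w * C))

section
variable {a b C S w₂ : ℝ}

theorem incircleVertex_mem_ellipse {w : ℝ} (ha : a ≠ 0) (hb : b ≠ 0)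
    (hw : w ^ 2 = (a + b) ^ 2 * (a ^ 2 * C ^ 2 + b ^ 2 * S ^ 2) - (a * b) ^ 2)
    (hw₂ : w₂ * ((a + b) * (a ^ 2 * C ^ 2 + b ^ 2 * S ^ 2)) = -(a * b)) :
    incircleVertex a b C S w₂ w 0 ^ 2 / a ^ 2 + incircleVertex a b C S w₂ w 1 ^ 2 / b ^ 2 = 1 := by
  simp only [incircleVertex, pt_apply_zero, pt_apply_one]
  field_simp
  linear_combination w₂ ^ 2 * (a ^ 2 * C ^ 2 + b ^ 2 * S ^ 2) * hw
    + (w₂ * ((a + b) * (a ^ 2 * C ^ 2 + b ^ 2 * S ^ 2)) - a * b) * hw₂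

theorem inner_ellipseToCircle_incircleVertex (w : ℝ) (ha : a ≠ 0) (hb : b ≠ 0) (hab : a + b ≠ 0)
    (hw₂ : w₂ * ((a + b) * (a ^ 2 * C ^ 2 + b ^ 2 * S ^ 2)) = -(a * b)) :
    inner ℝ (ellipseToCircle a b (pt (a * C) (b * S))) (incircleVertex a b C S w₂ w)
      = -(a * b / (a + b)) := by
  simp only [inner_ellipseToCircle, incircleVertex, pt_apply_zero, pt_apply_one]
  field_simp
  linear_combination hw₂

theorem inner_ellipseToCircle_incircleVertex_neg {w : ℝ} (ha : a ≠ 0) (hb : b ≠ 0)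
    (hab : a + b ≠ 0) (hCS : S ^ 2 + C ^ 2 = 1)
    (hw : w ^ 2 = (a + b) ^ 2 * (a ^ 2 * C ^ 2 + b ^ 2 * S ^ 2) - (a * b) ^ 2)
    (hw₂ : w₂ * ((a + b) * (a ^ 2 * C ^ 2 + b ^ 2 * S ^ 2)) = -(a * b)) :
    inner ℝ (ellipseToCircle a b (incircleVertex a b C S w₂ w)) (incircleVertex a b C S w₂ (-w))
      = -(a * b / (a + b)) := by
  simp only [inner_ellipseToCircle, incircleVertex, pt_apply_zero, pt_apply_one]
  field_simp
  linear_combination -(w₂ ^ 2 * (a + b) * (a * C ^ 2 + b * S ^ 2)) * hw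
    - (w₂ * ((a + b) * (a ^ 2 * C ^ 2 + b ^ 2 * S ^ 2)) - a * b) * hw₂
    - w₂ ^ 2 * (a + b) ^ 2 * a * b * (a ^ 2 * C ^ 2 + b ^ 2 * S ^ 2) * hCS

end

theorem infDist_zero_affineSpan_pair_of_ellipse {a b r : ℝ} (ha : 0 < a) (hb : 0 < b) (hr : 0 < r)
    {p q s : EuclideanSpace ℝ (Fin 2)} (hp : p 0 ^ 2 / a ^ 2 + p 1 ^ 2 / b ^ 2 = 1)
    (hs : s 0 ^ 2 / a ^ 2 + s 1 ^ 2 / b ^ 2 = 1)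
    (hpq : inner ℝ (ellipseToCircle a b p) q = -r) (hsp : inner ℝ (ellipseToCircle a b s) p = -r)
    (hsq : inner ℝ (ellipseToCircle a b s) q = -r) :
    Metric.infDist 0 (line[ℝ, p, q] : Set (EuclideanSpace ℝ (Fin 2))) = r := by
  have : Fact (finrank ℝ (EuclideanSpace ℝ (Fin 2)) = 2) := ⟨finrank_euclideanSpace_fin⟩
  have hne : p ≠ q := by
    rintro rfl
    linarith [inner_ellipseToCircle_self_pos ha hb hp]
  rw [← abs_of_pos hr]
  refine infDist_zero_affineSpan_pair_of_inner_eq (n := -ellipseToCircle a b s) ?_ ?_ ?_ hne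
  · rw [norm_neg, norm_ellipseToCircle hs]
  · rw [inner_neg_left, hsp, neg_neg]
  · rw [inner_neg_left, hsq, neg_neg]

theorem incircle_family_parametrization (a b c t : ℝ) (hb : 0 < b) (hab : b < a)
    (hc : c ^ 2 = a ^ 2 - b ^ 2)
    (r : ℝ) (hr : r = a * b / (a + b))
    (w₁ w₂ : ℝ)
    (hw₁ : w₁ = Real.sqrt (c ^ 2 * (a + b) ^ 2 * Real.cos t ^ 2 + 2 * a * b ^ 3 + b ^ 4))
    (hw₂ : w₂ = -(a * b) / ((c ^ 2 * Real.cos t ^ 2 + b ^ 2) * (a + b)))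
    (P₁ P₂ P₃ : EuclideanSpace ℝ (Fin 2))
    (hP₁ : P₁ = pt (a * Real.cos t) (b * Real.sin t))
    (hP₂ : P₂ = pt (w₂ * (a ^ 2 * Real.cos t - w₁ * Real.sin t))
                   (w₂ * (b ^ 2 * Real.sin t + w₁ * Real.cos t)))
    (hP₃ : P₃ = pt (w₂ * (a ^ 2 * Real.cos t + w₁ * Real.sin t))
                   (w₂ * (b ^ 2 * Real.sin t - w₁ * Real.cos t))) :
    ((P₂ 0) ^ 2 / a ^ 2 + (P₂ 1) ^ 2 / b ^ 2 = 1 ∧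
     (P₃ 0) ^ 2 / a ^ 2 + (P₃ 1) ^ 2 / b ^ 2 = 1) ∧
    Metric.infDist 0 (affineSpan ℝ {P₁, P₂} : Set (EuclideanSpace ℝ (Fin 2))) = r ∧
    Metric.infDist 0 (affineSpan ℝ {P₂, P₃} : Set (EuclideanSpace ℝ (Fin 2))) = r ∧
    Metric.infDist 0 (affineSpan ℝ {P₃, P₁} : Set (EuclideanSpace ℝ (Fin 2))) = r := by
  set C := Real.cos t
  set S := Real.sin t
  have hCS : S ^ 2 + C ^ 2 = 1 := Real.sin_sq_add_cos_sq t
  have ha : 0 < a := hb.trans hab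
  have hd : c ^ 2 * C ^ 2 + b ^ 2 = a ^ 2 * C ^ 2 + b ^ 2 * S ^ 2 := by
    rw [hc]; linear_combination -b ^ 2 * hCS
  have hw : w₁ ^ 2 = (a + b) ^ 2 * (a ^ 2 * C ^ 2 + b ^ 2 * S ^ 2) - (a * b) ^ 2 := by
    rw [hw₁, Real.sq_sqrt (by positivity), ← hd]; ring
  have hw₂' : w₂ * ((a + b) * (a ^ 2 * C ^ 2 + b ^ 2 * S ^ 2)) = -(a * b) := by
    rw [hw₂, ← hd]; field_simp
  have hP₂' : P₂ = incircleVertex a b C S w₂ w₁ := hP₂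
  have hP₃' : P₃ = incircleVertex a b C S w₂ (-w₁) := by
    rw [hP₃, incircleVertex]; congr 1 <;> ring
  have hP₁e : P₁ 0 ^ 2 / a ^ 2 + P₁ 1 ^ 2 / b ^ 2 = 1 := by
    rw [hP₁, pt_apply_zero, pt_apply_one]; field_simp; linear_combination hCS
  subst hP₁ hP₂' hP₃' hr
  have hab' : a + b ≠ 0 := by positivity
  have h₂ := incircleVertex_mem_ellipse ha.ne' hb.ne' hw hw₂'
  have h₃ := incircleVertex_mem_ellipse ha.ne' hb.ne' (by rwa [neg_sq]) hw₂'
  have h₁₂ := inner_ellipseToCircle_incircleVertex w₁ ha.ne' hb.ne' hab' hw₂'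
  have h₁₃ := inner_ellipseToCircle_incircleVertex (-w₁) ha.ne' hb.ne' hab' hw₂'
  have h₂₃ := inner_ellipseToCircle_incircleVertex_neg ha.ne' hb.ne' hab' hCS hw hw₂'
  have h₂₁ := (inner_ellipseToCircle_comm _ _ _ _).trans h₁₂
  have h₃₁ := (inner_ellipseToCircle_comm _ _ _ _).trans h₁₃
  have h₃₂ := (inner_ellipseToCircle_comm _ _ _ _).trans h₂₃
  have hr₀ : 0 < a * b / (a + b) := by positivity
  exact ⟨⟨h₂, h₃⟩,
    infDist_zero_affineSpan_pair_of_ellipse ha hb hr₀ hP₁e h₃ h₁₂ h₃₁ h₃₂,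
    infDist_zero_affineSpan_pair_of_ellipse ha hb hr₀ h₂ hP₁e h₂₃ h₁₂ h₁₃,
    infDist_zero_affineSpan_pair_of_ellipse ha hb hr₀ h₃ h₂ h₃₁ h₂₃ h₂₁⟩
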